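/- Let λ < 0 and δ > 0, and let g : (0,δ) → ℝ be measurable with ∫₀^δ t^{-2λ} g(t)² dt/t < ∞. Then: (i) t ↦ g(t)/t is integrable on (v,δ) for every v ∈ (0,δ), so that ũ(v) := −∫_v^δ g(t)/t dt is well defined; (ii) ∫₀^δ v^{-2λ} ũ(v)² dv/v ≤ (1/λ²) · ∫₀^δ t^{-2λ} g(t)² dt/t (in particular the bound is independent of δ); (iii) ũ is locally absolutely continuous on (0,δ) with v·ũ'(v) = g(v) for almost every v. -/

import Mathlib

/-!
Cauchy–Schwarz against the weight `t ^ (-κ - 1)`, whose integral over `(v, ∞)` is `v ^ (-κ) / κ`,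
bounds `(∫_v^δ |g t| dt/t)²` by `v ^ (-κ) / κ` times the `b`-weighted `L²` mass
`∫_v^δ t ^ κ g(t)² dt/t`. With `κ = -2λ` this gives integrability on `(v, δ)`; with `κ = -λ`,
multiplying by `v ^ (-2λ - 1)` and integrating in `v`, Tonelli turns the double integral into
`∫ t ^ (-λ) g(t)² (∫_0^t v ^ (-λ - 1) dv) dt/t`, which is Hardy's inequality with constant `1/λ²`.
Finally `ũ v = ∫_δ^v g(t)/t dt`, so (iii) is the Lebesgue differentiation theorem.
-/

open MeasureTheory Set Filter
open scoped ENNReal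

theorem ENNReal.sq_lintegral_mul_le {α : Type*} [MeasurableSpace α] {μ : Measure α}
    {f h : α → ℝ≥0∞} (hf : AEMeasurable f μ) (hh : AEMeasurable h μ) :
    (∫⁻ x, f x * h x ∂μ) ^ 2 ≤ (∫⁻ x, f x ^ 2 ∂μ) * ∫⁻ x, h x ^ 2 ∂μ := by
  have holder := ENNReal.lintegral_mul_le_Lp_mul_Lq μ Real.HolderConjugate.two_two hf hh
  simp only [Pi.mul_apply, ENNReal.rpow_two] at holder
  calc (∫⁻ x, f x * h x ∂μ) ^ 2
      ≤ ((∫⁻ x, f x ^ 2 ∂μ) ^ (1 / 2 : ℝ) * (∫⁻ x, h x ^ 2 ∂μ) ^ (1 / 2 : ℝ)) ^ 2 := by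
        gcongr
    _ = (∫⁻ x, f x ^ 2 ∂μ) * ∫⁻ x, h x ^ 2 ∂μ := by
        rw [mul_pow, ← ENNReal.rpow_natCast, ← ENNReal.rpow_natCast, ← ENNReal.rpow_mul,
          ← ENNReal.rpow_mul]
        norm_num

theorem sq_lintegral_ofReal_abs_le {α : Type*} [MeasurableSpace α] {μ : Measure α}
    {F w : α → ℝ} (hF : AEMeasurable F μ) (hw : AEMeasurable w μ)
    (hw_pos : ∀ᵐ x ∂μ, 0 < w x) :
    (∫⁻ x, ENNReal.ofReal |F x| ∂μ) ^ 2 ≤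
      (∫⁻ x, ENNReal.ofReal (F x ^ 2 / w x) ∂μ) * ∫⁻ x, ENNReal.ofReal (w x) ∂μ := by
  have hfactor : ∀ᵐ x ∂μ, ENNReal.ofReal |F x| =
      ENNReal.ofReal (|F x| / √(w x)) * ENNReal.ofReal √(w x) := by
    filter_upwards [hw_pos] with x hx
    rw [← ENNReal.ofReal_mul (by positivity), div_mul_cancel₀ _ (Real.sqrt_pos.2 hx).ne']
  have hsq₁ : ∀ᵐ x ∂μ, ENNReal.ofReal (|F x| / √(w x)) ^ 2 = ENNReal.ofReal (F x ^ 2 / w x) := by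
    filter_upwards [hw_pos] with x hx
    rw [← ENNReal.ofReal_pow (by positivity), div_pow, sq_abs, Real.sq_sqrt hx.le]
  have hsq₂ : ∀ᵐ x ∂μ, ENNReal.ofReal √(w x) ^ 2 = ENNReal.ofReal (w x) := by
    filter_upwards [hw_pos] with x hx
    rw [← ENNReal.ofReal_pow (Real.sqrt_nonneg _), Real.sq_sqrt hx.le]
  rw [lintegral_congr_ae hfactor, ← lintegral_congr_ae hsq₁, ← lintegral_congr_ae hsq₂]
  exact ENNReal.sq_lintegral_mul_le (by fun_prop) (by fun_prop)

theorem lintegral_Ioi_rpow_of_lt {a c : ℝ} (ha : a < -1) (hc : 0 < c) :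
    ∫⁻ t in Ioi c, ENNReal.ofReal (t ^ a) = ENNReal.ofReal (-c ^ (a + 1) / (a + 1)) := by
  rw [← integral_Ioi_rpow_of_lt ha hc, ofReal_integral_eq_lintegral_ofReal
    (integrableOn_Ioi_rpow_of_lt ha hc)]
  filter_upwards [ae_restrict_mem measurableSet_Ioi] with t ht
  exact Real.rpow_nonneg (hc.trans ht).le a

theorem lintegral_Ioo_zero_rpow {a t : ℝ} (ha : -1 < a) (ht : 0 ≤ t) :
    ∫⁻ v in Ioo 0 t, ENNReal.ofReal (v ^ a) = ENNReal.ofReal (t ^ (a + 1) / (a + 1)) := by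
  have hint : IntegrableOn (fun v : ℝ => v ^ a) (Ioo 0 t) :=
    (intervalIntegral.intervalIntegrable_rpow' ha).1.mono_set Ioo_subset_Ioc_self
  rw [← ofReal_integral_eq_lintegral_ofReal hint, ← integral_Ioc_eq_integral_Ioo,
    ← intervalIntegral.integral_of_le ht, integral_rpow (Or.inl ha),
    Real.zero_rpow (by linarith), sub_zero]
  filter_upwards [ae_restrict_mem measurableSet_Ioo] with v hv
  exact Real.rpow_nonneg hv.1.le a

theorem lintegral_mul_setLIntegral_Ioi_comm {μ : Measure ℝ} [SFinite μ] {F G : ℝ → ℝ≥0∞}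
    (hF : Measurable F) (hG : Measurable G) :
    ∫⁻ x, F x * ∫⁻ y in Ioi x, G y ∂μ ∂μ = ∫⁻ y, G y * ∫⁻ x in Iio y, F x ∂μ ∂μ := by
  have hS : MeasurableSet {p : ℝ × ℝ | p.1 < p.2} := measurableSet_lt measurable_fst measurable_snd
  calc ∫⁻ x, F x * ∫⁻ y in Ioi x, G y ∂μ ∂μ
      = ∫⁻ x, ∫⁻ y, {p : ℝ × ℝ | p.1 < p.2}.indicator (fun p => F p.1 * G p.2) (x, y) ∂μ ∂μ := by
        congr 1 with x
        rw [← lintegral_const_mul _ hG, ← lintegral_indicator measurableSet_Ioi]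
        rfl
    _ = ∫⁻ y, ∫⁻ x, {p : ℝ × ℝ | p.1 < p.2}.indicator (fun p => F p.1 * G p.2) (x, y) ∂μ ∂μ :=
        lintegral_lintegral_swap ((((hF.comp measurable_fst).mul
          (hG.comp measurable_snd)).indicator hS).aemeasurable)
    _ = ∫⁻ y, G y * ∫⁻ x in Iio y, F x ∂μ ∂μ := by
        congr 1 with y
        rw [← lintegral_const_mul _ hF, ← lintegral_indicator measurableSet_Iio]
        congr 1 with x
        simp only [indicator, mem_ofPred_eq, mem_Iio, mul_comm]

theorem setLIntegral_Ioo_mul_setLIntegral_Ioo_comm {F G : ℝ → ℝ≥0∞} (hF : Measurable F)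
    (hG : Measurable G) (a b : ℝ) :
    ∫⁻ x in Ioo a b, F x * ∫⁻ y in Ioo x b, G y =
      ∫⁻ y in Ioo a b, G y * ∫⁻ x in Ioo a y, F x := by
  have hIoi : ∀ x ∈ Ioo a b, ∫⁻ y in Ioo x b, G y = ∫⁻ y in Ioi x ∩ Ioo a b, G y := by
    intro x hx
    rw [Ioi_inter_Ioo, max_eq_left hx.1.le]
  have hIio : ∀ y ∈ Ioo a b, ∫⁻ x in Ioo a y, F x = ∫⁻ x in Iio y ∩ Ioo a b, F x := by
    intro y hy
    rw [Iio_inter_Ioo, min_eq_left hy.2.le]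
  have swap := lintegral_mul_setLIntegral_Ioi_comm (μ := volume.restrict (Ioo a b)) hF hG
  simp only [Measure.restrict_restrict measurableSet_Ioi,
    Measure.restrict_restrict measurableSet_Iio] at swap
  rw [setLIntegral_congr_fun measurableSet_Ioo (fun x hx => by rw [hIoi x hx]), swap]
  exact setLIntegral_congr_fun measurableSet_Ioo (fun y hy => by rw [hIio y hy])

theorem ofReal_sq_integral_le_sq_lintegral {α : Type*} [MeasurableSpace α] {μ : Measure α}
    (f : α → ℝ) : ENNReal.ofReal ((∫ x, f x ∂μ) ^ 2) ≤ (∫⁻ x, ENNReal.ofReal |f x| ∂μ) ^ 2 := by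
  rw [← sq_abs, ENNReal.ofReal_pow (abs_nonneg _)]
  simp_rw [← Real.enorm_eq_ofReal_abs]
  gcongr
  exact enorm_integral_le_lintegral_enorm f

theorem sq_lintegral_abs_div_le {g : ℝ → ℝ} {s : Set ℝ} {κ v : ℝ}
    (hg : AEMeasurable g (volume.restrict s)) (hs : MeasurableSet s) (hsv : s ⊆ Ioi v)
    (hκ : 0 < κ) (hv : 0 < v) :
    (∫⁻ t in s, ENNReal.ofReal |g t / t|) ^ 2 ≤
      ENNReal.ofReal (v ^ (-κ) / κ) * ∫⁻ t in s, ENNReal.ofReal (t ^ κ * g t ^ 2 / t) := by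
  have hpos : ∀ t ∈ s, 0 < t := fun t ht => hv.trans (hsv ht)
  have hweight : ∀ᵐ t ∂volume.restrict s, 0 < t ^ (-κ - 1) := by
    filter_upwards [ae_restrict_mem hs] with t ht
    exact Real.rpow_pos_of_pos (hpos t ht) _
  have hsq : ∫⁻ t in s, ENNReal.ofReal ((g t / t) ^ 2 / t ^ (-κ - 1)) =
      ∫⁻ t in s, ENNReal.ofReal (t ^ κ * g t ^ 2 / t) := by
    refine setLIntegral_congr_fun hs fun t ht => ?_
    have ht := hpos t ht
    rw [Real.rpow_sub_one ht.ne', Real.rpow_neg ht.le]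
    field_simp
  have hw : ∫⁻ t in s, ENNReal.ofReal (t ^ (-κ - 1)) ≤ ENNReal.ofReal (v ^ (-κ) / κ) := by
    calc ∫⁻ t in s, ENNReal.ofReal (t ^ (-κ - 1))
        ≤ ∫⁻ t in Ioi v, ENNReal.ofReal (t ^ (-κ - 1)) := lintegral_mono_set hsv
      _ = ENNReal.ofReal (v ^ (-κ) / κ) := by
        rw [lintegral_Ioi_rpow_of_lt (by linarith) hv, sub_add_cancel, neg_div_neg_eq]
  calc (∫⁻ t in s, ENNReal.ofReal |g t / t|) ^ 2
      ≤ (∫⁻ t in s, ENNReal.ofReal ((g t / t) ^ 2 / t ^ (-κ - 1))) *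
          ∫⁻ t in s, ENNReal.ofReal (t ^ (-κ - 1)) :=
        sq_lintegral_ofReal_abs_le (by fun_prop) (by fun_prop) hweight
    _ ≤ ENNReal.ofReal (v ^ (-κ) / κ) * ∫⁻ t in s, ENNReal.ofReal (t ^ κ * g t ^ 2 / t) := by
        rw [hsq, mul_comm]
        gcongr

theorem integrableOn_div_of_lintegral_rpow_mul_sq_lt_top {g : ℝ → ℝ} {s : Set ℝ} {κ v : ℝ}
    (hg : AEMeasurable g (volume.restrict s)) (hs : MeasurableSet s) (hsv : s ⊆ Ioi v)
    (hκ : 0 < κ) (hv : 0 < v) (hfin : ∫⁻ t in s, ENNReal.ofReal (t ^ κ * g t ^ 2 / t) < ⊤) :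
    IntegrableOn (fun t => g t / t) s := by
  refine ⟨(hg.div measurable_id.aemeasurable).aestronglyMeasurable, ?_⟩
  rw [hasFiniteIntegral_iff_norm]
  simp only [Real.norm_eq_abs]
  have hsq_lt_top := (sq_lintegral_abs_div_le hg hs hsv hκ hv).trans_lt
    (ENNReal.mul_lt_top ENNReal.ofReal_lt_top hfin)
  simpa using hsq_lt_top

theorem lintegral_rpow_mul_sq_setIntegral_Ioo_le {lam δ : ℝ} {g : ℝ → ℝ} (hlam : lam < 0)
    (hg : Measurable g) :
    ∫⁻ v in Ioo 0 δ, ENNReal.ofReal (v ^ (-(2 * lam)) * (∫ t in Ioo v δ, g t / t) ^ 2 / v) ≤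
      ENNReal.ofReal (1 / lam ^ 2) *
        ∫⁻ t in Ioo 0 δ, ENNReal.ofReal (t ^ (-(2 * lam)) * g t ^ 2 / t) := by
  obtain ⟨κ, hκ, rfl⟩ : ∃ κ > 0, lam = -κ := ⟨-lam, neg_pos.2 hlam, (neg_neg lam).symm⟩
  rw [show -(2 * -κ) = κ + κ by ring, neg_sq]
  set q : ℝ → ℝ≥0∞ := fun t => ENNReal.ofReal (t ^ κ * g t ^ 2 / t)
  have hpointwise : ∀ v ∈ Ioo 0 δ,
      ENNReal.ofReal (v ^ (κ + κ) * (∫ t in Ioo v δ, g t / t) ^ 2 / v) ≤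
        ENNReal.ofReal (1 / κ) * (ENNReal.ofReal (v ^ (κ - 1)) * ∫⁻ t in Ioo v δ, q t) := by
    intro v hv
    have hv0 := hv.1
    calc ENNReal.ofReal (v ^ (κ + κ) * (∫ t in Ioo v δ, g t / t) ^ 2 / v)
        = ENNReal.ofReal (v ^ (κ + κ) / v) *
            ENNReal.ofReal ((∫ t in Ioo v δ, g t / t) ^ 2) := by
          rw [← ENNReal.ofReal_mul (by positivity)]
          ring_nf
      _ ≤ ENNReal.ofReal (v ^ (κ + κ) / v) *
            (ENNReal.ofReal (v ^ (-κ) / κ) * ∫⁻ t in Ioo v δ, q t) := by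
          gcongr
          exact (ofReal_sq_integral_le_sq_lintegral _).trans <| sq_lintegral_abs_div_le
            hg.aemeasurable measurableSet_Ioo (fun t ht => ht.1) hκ hv0
      _ = ENNReal.ofReal (1 / κ) * (ENNReal.ofReal (v ^ (κ - 1)) * ∫⁻ t in Ioo v δ, q t) := by
          rw [← mul_assoc, ← mul_assoc, ← ENNReal.ofReal_mul (by positivity),
            ← ENNReal.ofReal_mul (by positivity)]
          congr 2
          have hvκ : 0 < v ^ κ := Real.rpow_pos_of_pos hv0 κ
          rw [Real.rpow_sub_one hv0.ne', Real.rpow_add hv0, Real.rpow_neg hv0.le]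
          field_simp
  have hinner : ∀ t ∈ Ioo 0 δ, q t * ∫⁻ v in Ioo 0 t, ENNReal.ofReal (v ^ (κ - 1)) =
      ENNReal.ofReal (1 / κ) * ENNReal.ofReal (t ^ (κ + κ) * g t ^ 2 / t) := by
    intro t ht
    have ht0 := ht.1
    rw [lintegral_Ioo_zero_rpow (by linarith) ht0.le, ← ENNReal.ofReal_mul (by positivity),
      ← ENNReal.ofReal_mul (by positivity), sub_add_cancel, Real.rpow_add ht0]
    congr 1
    field_simp
  calc ∫⁻ v in Ioo 0 δ, ENNReal.ofReal (v ^ (κ + κ) * (∫ t in Ioo v δ, g t / t) ^ 2 / v)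
      ≤ ∫⁻ v in Ioo 0 δ,
          ENNReal.ofReal (1 / κ) * (ENNReal.ofReal (v ^ (κ - 1)) * ∫⁻ t in Ioo v δ, q t) :=
        setLIntegral_mono' measurableSet_Ioo hpointwise
    _ = ENNReal.ofReal (1 / κ) *
          ∫⁻ t in Ioo 0 δ, q t * ∫⁻ v in Ioo 0 t, ENNReal.ofReal (v ^ (κ - 1)) := by
        rw [lintegral_const_mul' _ _ ENNReal.ofReal_ne_top,
          setLIntegral_Ioo_mul_setLIntegral_Ioo_comm (by fun_prop) (by fun_prop)]
    _ = ENNReal.ofReal (1 / κ ^ 2) *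
          ∫⁻ t in Ioo 0 δ, ENNReal.ofReal (t ^ (κ + κ) * g t ^ 2 / t) := by
        rw [setLIntegral_congr_fun measurableSet_Ioo hinner,
          lintegral_const_mul' _ _ ENNReal.ofReal_ne_top, ← mul_assoc,
          ← ENNReal.ofReal_mul (by positivity)]
        congr 2
        field_simp

theorem neg_setIntegral_Ioo_eq_intervalIntegral {E : Type*} [NormedAddCommGroup E]
    [NormedSpace ℝ E] {f : ℝ → E} {a b : ℝ} (hab : a ≤ b) :
    -∫ t in Ioo a b, f t = ∫ t in b..a, f t := by
  rw [intervalIntegral.integral_symm, intervalIntegral.integral_of_le hab,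
    integral_Ioc_eq_integral_Ioo]

theorem ae_hasDerivAt_intervalIntegral_of_forall_Ioo {E : Type*} [NormedAddCommGroup E]
    [NormedSpace ℝ E] [CompleteSpace E] {f : ℝ → E} {a b : ℝ}
    (hf : ∀ x ∈ Ioo a b, IntervalIntegrable f volume x b) :
    ∀ᵐ x ∂volume.restrict (Ioo a b), HasDerivAt (fun x => ∫ t in b..x, f t) (f x) x := by
  rcases le_or_gt b a with hba | hab
  · simp [Ioo_eq_empty_of_le hba]
  obtain ⟨c, -, hc_mem, hc_lim⟩ := exists_seq_strictAnti_tendsto' hab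
  have hderiv : ∀ᵐ x, ∀ n, x ∈ uIcc (c n) b →
      ∀ c' ∈ uIcc (c n) b, HasDerivAt (fun x => ∫ t in c'..x, f t) (f x) x :=
    ae_all_iff.2 fun n => (hf (c n) (hc_mem n)).ae_hasDerivAt_integral
  rw [ae_restrict_iff' measurableSet_Ioo]
  filter_upwards [hderiv] with x hx hxab
  obtain ⟨n, hn⟩ := (hc_lim.eventually (eventually_lt_nhds hxab.1)).exists
  exact hx n (mem_uIcc_of_le hn.le hxab.2.le) b right_mem_uIcc

theorem weighted_b_primitive_neg_weight_general
    (lam δ : ℝ) (hlam : lam < 0) (g : ℝ → ℝ) (hmeas : Measurable g)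
    (hg : ∫⁻ t in Ioo 0 δ, ENNReal.ofReal (t ^ (-(2 * lam)) * (g t) ^ 2 / t) < ⊤) :
    -- (i) integrability of `t ↦ g t / t` on `(v, δ)`, so `ũ v := -∫ t in Ioo v δ, g t / t`
    -- is well defined
    (∀ v ∈ Ioo (0 : ℝ) δ, IntegrableOn (fun t => g t / t) (Ioo v δ)) ∧
    -- (ii) the weighted L² bound, with constant `1/λ²` independent of `δ`
    (∫⁻ v in Ioo 0 δ,
        ENNReal.ofReal (v ^ (-(2 * lam)) * (-∫ t in Ioo v δ, g t / t) ^ 2 / v) ≤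
      ENNReal.ofReal (1 / lam ^ 2) *
        ∫⁻ t in Ioo 0 δ, ENNReal.ofReal (t ^ (-(2 * lam)) * (g t) ^ 2 / t)) ∧
    -- (iii) local absolute continuity: `ũ` is an indefinite integral on compact subintervals,
    -- and `v · ũ'(v) = g v` for a.e. `v ∈ (0,δ)`
    (∀ a ∈ Ioo (0 : ℝ) δ, ∀ b ∈ Ioo (0 : ℝ) δ,
        (-∫ t in Ioo b δ, g t / t) - (-∫ t in Ioo a δ, g t / t) = ∫ t in a..b, g t / t) ∧
    (∀ᵐ v ∂(volume.restrict (Ioo 0 δ)),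
        HasDerivAt (fun x => -∫ t in Ioo x δ, g t / t) (g v / v) v) := by
  have hint : ∀ v ∈ Ioo (0 : ℝ) δ, IntegrableOn (fun t => g t / t) (Ioo v δ) := fun v hv =>
    integrableOn_div_of_lintegral_rpow_mul_sq_lt_top hmeas.aemeasurable measurableSet_Ioo
      (fun t ht => ht.1) (by linarith) hv.1
      ((lintegral_mono_set (Ioo_subset_Ioo_left hv.1.le)).trans_lt hg)
  have hintI : ∀ v ∈ Ioo (0 : ℝ) δ, IntervalIntegrable (fun t => g t / t) volume v δ :=
    fun v hv => (intervalIntegrable_iff_integrableOn_Ioo_of_le hv.2.le).2 (hint v hv)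
  have hprim : ∀ v ∈ Ioo (0 : ℝ) δ, -∫ t in Ioo v δ, g t / t = ∫ t in δ..v, g t / t :=
    fun v hv => neg_setIntegral_Ioo_eq_intervalIntegral hv.2.le
  refine ⟨hint, ?_, fun a ha b hb => ?_, ?_⟩
  · simpa only [neg_sq] using lintegral_rpow_mul_sq_setIntegral_Ioo_le hlam hmeas
  · rw [hprim a ha, hprim b hb]
    exact intervalIntegral.integral_interval_sub_left (hintI b hb).symm (hintI a ha).symm
  · filter_upwards [ae_hasDerivAt_intervalIntegral_of_forall_Ioo hintI,
      ae_restrict_mem measurableSet_Ioo] with v hv hv_mem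
    exact hv.congr_of_eventuallyEq (eventually_of_mem (isOpen_Ioo.mem_nhds hv_mem) hprim)

/-- For `λ < 0`, the map `G̃_{λ,δ}` which integrates from the endpoint `δ`,
`ũ(v) = −∫_v^δ g(t) dt/t`, is a well-defined bounded primitive (with norm `1/|λ|` independent
of `δ`) of the weighted `L²` 1-form `g·dv/v` on `v^λ L²_b((0,δ))`:
`t ↦ g t / t` is integrable on `(v,δ)` for each `v ∈ (0,δ)`, `ũ` satisfies the weighted `L²`
bound with constant `1/λ²`, and `ũ` is locally absolutely continuous with `v·ũ'(v) = g(v)` a.e. -/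
theorem weighted_b_primitive_neg_weight
    (lam δ : ℝ) (hlam : lam < 0) (hδ : 0 < δ) (g : ℝ → ℝ) (hmeas : Measurable g)
    (hg : ∫⁻ t in Ioo 0 δ, ENNReal.ofReal (t ^ (-(2 * lam)) * (g t) ^ 2 / t) < ⊤) :
    -- (i) integrability of `t ↦ g t / t` on `(v, δ)`, so `ũ v := -∫ t in Ioo v δ, g t / t`
    -- is well defined
    (∀ v ∈ Ioo (0 : ℝ) δ, IntegrableOn (fun t => g t / t) (Ioo v δ)) ∧
    -- (ii) the weighted L² bound, with constant `1/λ²` independent of `δ`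
    (∫⁻ v in Ioo 0 δ,
        ENNReal.ofReal (v ^ (-(2 * lam)) * (-∫ t in Ioo v δ, g t / t) ^ 2 / v) ≤
      ENNReal.ofReal (1 / lam ^ 2) *
        ∫⁻ t in Ioo 0 δ, ENNReal.ofReal (t ^ (-(2 * lam)) * (g t) ^ 2 / t)) ∧
    -- (iii) local absolute continuity: `ũ` is an indefinite integral on compact subintervals,
    -- and `v · ũ'(v) = g v` for a.e. `v ∈ (0,δ)`
    (∀ a ∈ Ioo (0 : ℝ) δ, ∀ b ∈ Ioo (0 : ℝ) δ,
        (-∫ t in Ioo b δ, g t / t) - (-∫ t in Ioo a δ, g t / t) = ∫ t in a..b, g t / t) ∧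
    (∀ᵐ v ∂(volume.restrict (Ioo 0 δ)),
        HasDerivAt (fun x => -∫ t in Ioo x δ, g t / t) (g v / v) v) :=
  weighted_b_primitive_neg_weight_general lam δ hlam g hmeas hg
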